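/- arXiv:2005.11426 — 3 statements merged into one kernel-verified Lean document; each statement's English description precedes it below -/
import Mathlib

section
/- (Theorem 1) Fix α ∈ (0, 1) with (1 − α)/(1 + α) < √α, and fix fractional offsets i₁, j₁, m₁, n₁, i₂, j₂, m₂, n₂ ∈ [−1/2, 1/2). Then the IoU of the pair of boxes b₁, b₂ defined by the cell parameterization is the same for every choice of the parameters W₀ > 0, H₀ > 0, b_x, b_y ∈ ℝ and cell indices i, j, m, n ∈ ℤ: if (b₁, b₂) is built from (W₀, H₀, b_x, b_y, i, j, m, n) and (b₁′, b₂′) from (W₀′, H₀′, b_x′, b_y′, i′, j′, m′, n′) with the same α and the same fractional offsets, then IoU(b₁, b₂) = IoU(b₁′, b₂′). -/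
/-!
Changing `W₀, H₀, b_x, b_y, i, j, m, n` acts on both boxes by the same map
`(x, y) ↦ (l x + a, μ y + b)` with `l = W₀ / α^i > 0` and `μ = H₀ / α^j > 0`, since the widths
`W₀ / α^(i + i_k)` and the offsets `(b_x + m + m_k) δ_i` are all proportional to `W₀ / α^i`.
Such a map multiplies every area, including the intersection area, by `l μ`, so the IoU is
that of the normalised pair with widths `α^(-i_k)` and centres `(1 - α)/(1 + α) · m_k`.
-/

/-- Intersection area of two axis-aligned boxes given as (w, h, x, y):
the rectangle [x - w/2, x + w/2] × [y - h/2, y + h/2]. -/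
noncomputable def interArea (w₁ h₁ x₁ y₁ w₂ h₂ x₂ y₂ : ℝ) : ℝ :=
  max 0 (min (x₁ + w₁ / 2) (x₂ + w₂ / 2) - max (x₁ - w₁ / 2) (x₂ - w₂ / 2)) *
    max 0 (min (y₁ + h₁ / 2) (y₂ + h₂ / 2) - max (y₁ - h₁ / 2) (y₂ - h₂ / 2))

/-- Intersection over union of two axis-aligned boxes. -/
noncomputable def iou (w₁ h₁ x₁ y₁ w₂ h₂ x₂ y₂ : ℝ) : ℝ :=
  interArea w₁ h₁ x₁ y₁ w₂ h₂ x₂ y₂ /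
    (w₁ * h₁ + w₂ * h₂ - interArea w₁ h₁ x₁ y₁ w₂ h₂ x₂ y₂)
/-- Width (resp. height) of the k-th box in the cell parameterization:
w_k = W₀ / α^(i + i_k), with a real exponent (Real.rpow). -/
noncomputable def cellW (α W₀ : ℝ) (i : ℤ) (ik : ℝ) : ℝ := W₀ / α ^ ((i : ℝ) + ik)

/-- Offset partition spacing δ_i = (W₀ / α^i) · (1 − α)/(1 + α). -/
noncomputable def cellDelta (α W₀ : ℝ) (i : ℤ) : ℝ := W₀ / α ^ i * ((1 - α) / (1 + α))

/-- Offset of the k-th box in the cell parameterization: x_k = (b_x + m + m_k)·δ_i. -/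
noncomputable def cellX (α W₀ bX : ℝ) (i m : ℤ) (mk : ℝ) : ℝ :=
  (bX + (m : ℝ) + mk) * cellDelta α W₀ i

/-- IoU of the two boxes b₁, b₂ given by the cell parameterization with data
(α, W₀, H₀, b_x, b_y, i, j, m, n) and fractional offsets (i₁, j₁, m₁, n₁), (i₂, j₂, m₂, n₂). -/
noncomputable def cellIoU (α W₀ H₀ bX bY : ℝ) (i j m n : ℤ)
    (i₁ j₁ m₁ n₁ i₂ j₂ m₂ n₂ : ℝ) : ℝ :=
  iou (cellW α W₀ i i₁) (cellW α H₀ j j₁) (cellX α W₀ bX i m m₁) (cellX α H₀ bY j n n₁)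
      (cellW α W₀ i i₂) (cellW α H₀ j j₂) (cellX α W₀ bX i m m₂) (cellX α H₀ bY j n n₂)

noncomputable def overlapLength (x₁ w₁ x₂ w₂ : ℝ) : ℝ :=
  max 0 (min (x₁ + w₁ / 2) (x₂ + w₂ / 2) - max (x₁ - w₁ / 2) (x₂ - w₂ / 2))

theorem interArea_eq_overlapLength_mul (w₁ h₁ x₁ y₁ w₂ h₂ x₂ y₂ : ℝ) :
    interArea w₁ h₁ x₁ y₁ w₂ h₂ x₂ y₂ = overlapLength x₁ w₁ x₂ w₂ * overlapLength y₁ h₁ y₂ h₂ :=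
  rfl

theorem overlapLength_affine {l : ℝ} (hl : 0 ≤ l) (a x₁ w₁ x₂ w₂ : ℝ) :
    overlapLength (l * x₁ + a) (l * w₁) (l * x₂ + a) (l * w₂) = l * overlapLength x₁ w₁ x₂ w₂ := by
  have hend : ∀ x w : ℝ, l * x + a + l * w / 2 = l * (x + w / 2) + a := fun _ _ => by ring
  have hstart : ∀ x w : ℝ, l * x + a - l * w / 2 = l * (x - w / 2) + a := fun _ _ => by ring
  rw [overlapLength, overlapLength, hend, hend, hstart, hstart, min_add_add_right,
    max_add_add_right, add_sub_add_right_eq_sub, ← mul_min_of_nonneg _ _ hl,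
    ← mul_max_of_nonneg _ _ hl, ← mul_sub, mul_max_of_nonneg _ _ hl, mul_zero]

theorem iou_affine {l μ : ℝ} (hl : 0 < l) (hμ : 0 < μ) (a b w₁ h₁ x₁ y₁ w₂ h₂ x₂ y₂ : ℝ) :
    iou (l * w₁) (μ * h₁) (l * x₁ + a) (μ * y₁ + b) (l * w₂) (μ * h₂) (l * x₂ + a) (μ * y₂ + b) =
      iou w₁ h₁ x₁ y₁ w₂ h₂ x₂ y₂ := by
  have hinter : interArea (l * w₁) (μ * h₁) (l * x₁ + a) (μ * y₁ + b)
      (l * w₂) (μ * h₂) (l * x₂ + a) (μ * y₂ + b) = l * μ * interArea w₁ h₁ x₁ y₁ w₂ h₂ x₂ y₂ := by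
    rw [interArea_eq_overlapLength_mul, interArea_eq_overlapLength_mul,
      overlapLength_affine hl.le, overlapLength_affine hμ.le]
    ring
  rw [iou, iou, hinter, ← mul_div_mul_left (interArea w₁ h₁ x₁ y₁ w₂ h₂ x₂ y₂) _
    (mul_pos hl hμ).ne']
  congr 1
  ring

section Cell

variable {α : ℝ} (hα : 0 < α) (W₀ : ℝ) (i : ℤ)
include hα

theorem cellW_eq_mul (ik : ℝ) : cellW α W₀ i ik = W₀ / α ^ i * α ^ (-ik) := by
  rw [cellW, Real.rpow_add hα, Real.rpow_intCast, Real.rpow_neg hα.le]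
  ring

omit hα in
theorem cellX_eq_mul_add (bX : ℝ) (m : ℤ) (mk : ℝ) :
    cellX α W₀ bX i m mk =
      W₀ / α ^ i * ((1 - α) / (1 + α) * mk) + cellDelta α W₀ i * (bX + m) := by
  rw [cellX, cellDelta]
  ring

theorem cellIoU_eq_iou (H₀ bX bY : ℝ) (hW₀ : 0 < W₀) (hH₀ : 0 < H₀) (j m n : ℤ)
    (i₁ j₁ m₁ n₁ i₂ j₂ m₂ n₂ : ℝ) :
    cellIoU α W₀ H₀ bX bY i j m n i₁ j₁ m₁ n₁ i₂ j₂ m₂ n₂ =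
      iou (α ^ (-i₁)) (α ^ (-j₁)) ((1 - α) / (1 + α) * m₁) ((1 - α) / (1 + α) * n₁)
        (α ^ (-i₂)) (α ^ (-j₂)) ((1 - α) / (1 + α) * m₂) ((1 - α) / (1 + α) * n₂) := by
  simp only [cellIoU, cellW_eq_mul hα, cellX_eq_mul_add]
  exact iou_affine (by positivity) (by positivity) _ _ _ _ _ _ _ _ _ _

end Cell

theorem stmt_8_general (α : ℝ) (hα : α ∈ Set.Ioo (0 : ℝ) 1)
    (i₁ j₁ m₁ n₁ i₂ j₂ m₂ n₂ : ℝ)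
    (W₀ H₀ bX bY : ℝ) (hW₀ : 0 < W₀) (hH₀ : 0 < H₀) (i j m n : ℤ)
    (W₀' H₀' bX' bY' : ℝ) (hW₀' : 0 < W₀') (hH₀' : 0 < H₀') (i' j' m' n' : ℤ) :
    cellIoU α W₀ H₀ bX bY i j m n i₁ j₁ m₁ n₁ i₂ j₂ m₂ n₂ =
      cellIoU α W₀' H₀' bX' bY' i' j' m' n' i₁ j₁ m₁ n₁ i₂ j₂ m₂ n₂ := by
  rw [cellIoU_eq_iou hα.1 W₀ i H₀ bX bY hW₀ hH₀ j m n,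
    cellIoU_eq_iou hα.1 W₀' i' H₀' bX' bY' hW₀' hH₀' j' m' n']

theorem stmt_8 (α : ℝ) (hα : α ∈ Set.Ioo (0 : ℝ) 1)
    (hcond : (1 - α) / (1 + α) < Real.sqrt α)
    (i₁ j₁ m₁ n₁ i₂ j₂ m₂ n₂ : ℝ)
    (hi₁ : i₁ ∈ Set.Ico (-(1:ℝ)/2) (1/2)) (hj₁ : j₁ ∈ Set.Ico (-(1:ℝ)/2) (1/2))
    (hm₁ : m₁ ∈ Set.Ico (-(1:ℝ)/2) (1/2)) (hn₁ : n₁ ∈ Set.Ico (-(1:ℝ)/2) (1/2))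
    (hi₂ : i₂ ∈ Set.Ico (-(1:ℝ)/2) (1/2)) (hj₂ : j₂ ∈ Set.Ico (-(1:ℝ)/2) (1/2))
    (hm₂ : m₂ ∈ Set.Ico (-(1:ℝ)/2) (1/2)) (hn₂ : n₂ ∈ Set.Ico (-(1:ℝ)/2) (1/2))
    (W₀ H₀ bX bY : ℝ) (hW₀ : 0 < W₀) (hH₀ : 0 < H₀) (i j m n : ℤ)
    (W₀' H₀' bX' bY' : ℝ) (hW₀' : 0 < W₀') (hH₀' : 0 < H₀') (i' j' m' n' : ℤ) :
    cellIoU α W₀ H₀ bX bY i j m n i₁ j₁ m₁ n₁ i₂ j₂ m₂ n₂ =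
      cellIoU α W₀' H₀' bX' bY' i' j' m' n' i₁ j₁ m₁ n₁ i₂ j₂ m₂ n₂ :=
  stmt_8_general α hα i₁ j₁ m₁ n₁ i₂ j₂ m₂ n₂ W₀ H₀ bX bY hW₀ hH₀ i j m n W₀' H₀' bX' bY' hW₀' hH₀'
    i' j' m' n'
end

section
/- Fix α ∈ (0, 1) with (1 − α)/(1 + α) < √α, cell parameterization data W₀, H₀ > 0, b_x, b_y ∈ ℝ, i, j, m, n ∈ ℤ, and fractional offsets i₁, j₁, m₁, n₁, i₂, j₂, m₂, n₂ ∈ [−1/2, 1/2], and let b₁ = (x₁, y₁, w₁, h₁), b₂ = (x₂, y₂, w₂, h₂) be the two parameterized boxes. Then the horizontal overlap of b₁ and b₂ satisfies min(x₁ + w₁/2, x₂ + w₂/2) − max(x₁ − w₁/2, x₂ − w₂/2) = (W₀/α^i)·F̃_w, where F̃_w = min(m₁δ̃ + α^{−i₁}/2, m₂δ̃ + α^{−i₂}/2) − max(m₁δ̃ − α^{−i₁}/2, m₂δ̃ − α^{−i₂}/2) with δ̃ = (1 − α)/(1 + α); in particular the horizontal overlap is a positive multiple of W₀/α^i that does not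 depend on W₀, i, b_x or m, and the vertical overlap is the analogous positive multiple of H₀/α^j that does not depend on H₀, j, b_y or n. -/
private lemma overlap_eq (α W bc : ℝ) (hα : 0 < α) (i m : ℤ) (δt m₁ m₂ i₁ i₂ : ℝ)
    (hδt : δt = (1 - α) / (1 + α)) (hW : 0 ≤ W) :
    min (cellX α W bc i m m₁ + cellW α W i i₁ / 2)
        (cellX α W bc i m m₂ + cellW α W i i₂ / 2) -
      max (cellX α W bc i m m₁ - cellW α W i i₁ / 2)
        (cellX α W bc i m m₂ - cellW α W i i₂ / 2) =
    W / α ^ i *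
      (min (m₁ * δt + α ^ (-i₁) / 2) (m₂ * δt + α ^ (-i₂) / 2) -
        max (m₁ * δt - α ^ (-i₁) / 2) (m₂ * δt - α ^ (-i₂) / 2)) := by
  have hC : (0:ℝ) ≤ W / α ^ i := div_nonneg hW (zpow_pos hα i).le
  set C : ℝ := W / α ^ i with hCdef
  have hcw : ∀ ik : ℝ, cellW α W i ik = C * α ^ (-ik) := by
    intro ik
    rw [cellW, Real.rpow_add hα, Real.rpow_intCast, Real.rpow_neg hα.le, hCdef]
    field_simp
  have hcx : ∀ mk : ℝ, cellX α W bc i m mk = C * ((bc + m + mk) * δt) := by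
    intro mk
    rw [cellX, cellDelta, hδt, hCdef]; ring
  have hmin : ∀ a b : ℝ, min (C * a) (C * b) = C * min a b := fun a b =>
    (mul_min_of_nonneg a b hC).symm
  have hmax : ∀ a b : ℝ, max (C * a) (C * b) = C * max a b := fun a b =>
    (mul_max_of_nonneg a b hC).symm
  have e1 : ∀ mk ik : ℝ, cellX α W bc i m mk + cellW α W i ik / 2 =
      C * ((bc + m) * δt + (mk * δt + α ^ (-ik) / 2)) := by
    intro mk ik; rw [hcx, hcw]; ring
  have e2 : ∀ mk ik : ℝ, cellX α W bc i m mk - cellW α W i ik / 2 =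
      C * ((bc + m) * δt + (mk * δt - α ^ (-ik) / 2)) := by
    intro mk ik; rw [hcx, hcw]; ring
  rw [e1, e1, e2, e2, hmin, hmax, min_add_add_left, max_add_add_left]
  ring

private lemma Ft_pos (α δt m₁ m₂ i₁ i₂ : ℝ) (hα : α ∈ Set.Ioo (0:ℝ) 1)
    (hδt : δt = (1 - α) / (1 + α)) (hcond : (1 - α) / (1 + α) < Real.sqrt α)
    (hm₁ : m₁ ∈ Set.Icc (-(1:ℝ)/2) (1/2)) (hm₂ : m₂ ∈ Set.Icc (-(1:ℝ)/2) (1/2))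
    (hi₁ : i₁ ∈ Set.Icc (-(1:ℝ)/2) (1/2)) (hi₂ : i₂ ∈ Set.Icc (-(1:ℝ)/2) (1/2)) :
    0 < min (m₁ * δt + α ^ (-i₁) / 2) (m₂ * δt + α ^ (-i₂) / 2) -
        max (m₁ * δt - α ^ (-i₁) / 2) (m₂ * δt - α ^ (-i₂) / 2) := by
  obtain ⟨hα0, hα1⟩ := hα
  have hδt0 : 0 ≤ δt := by
    rw [hδt]; apply div_nonneg <;> linarith
  have hδs : δt < Real.sqrt α := hδt ▸ hcond
  have hs1 : Real.sqrt α ≤ α ^ (-i₁) := by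
    rw [Real.sqrt_eq_rpow]
    exact Real.rpow_le_rpow_of_exponent_ge hα0 hα1.le (by linarith [hi₁.1])
  have hs2 : Real.sqrt α ≤ α ^ (-i₂) := by
    rw [Real.sqrt_eq_rpow]
    exact Real.rpow_le_rpow_of_exponent_ge hα0 hα1.le (by linarith [hi₂.1])
  have hsp : 0 < Real.sqrt α := Real.sqrt_pos.mpr hα0
  rw [sub_pos, max_lt_iff, lt_min_iff, lt_min_iff]
  refine ⟨⟨by nlinarith, by nlinarith [hm₁.1, hm₁.2, hm₂.1, hm₂.2]⟩,
    ⟨by nlinarith [hm₁.1, hm₁.2, hm₂.1, hm₂.2], by nlinarith⟩⟩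

theorem stmt_10 (α : ℝ) (hα : α ∈ Set.Ioo (0 : ℝ) 1)
    (hcond : (1 - α) / (1 + α) < Real.sqrt α)
    (W₀ H₀ bX bY : ℝ) (hW₀ : 0 < W₀) (hH₀ : 0 < H₀) (i j m n : ℤ)
    (i₁ j₁ m₁ n₁ i₂ j₂ m₂ n₂ : ℝ)
    (hi₁ : i₁ ∈ Set.Icc (-(1:ℝ)/2) (1/2)) (hj₁ : j₁ ∈ Set.Icc (-(1:ℝ)/2) (1/2))
    (hm₁ : m₁ ∈ Set.Icc (-(1:ℝ)/2) (1/2)) (hn₁ : n₁ ∈ Set.Icc (-(1:ℝ)/2) (1/2))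
    (hi₂ : i₂ ∈ Set.Icc (-(1:ℝ)/2) (1/2)) (hj₂ : j₂ ∈ Set.Icc (-(1:ℝ)/2) (1/2))
    (hm₂ : m₂ ∈ Set.Icc (-(1:ℝ)/2) (1/2)) (hn₂ : n₂ ∈ Set.Icc (-(1:ℝ)/2) (1/2))
    (δt Ftw Fth : ℝ) (hδt : δt = (1 - α) / (1 + α))
    (hFtw : Ftw = min (m₁ * δt + α ^ (-i₁) / 2) (m₂ * δt + α ^ (-i₂) / 2) -
                    max (m₁ * δt - α ^ (-i₁) / 2) (m₂ * δt - α ^ (-i₂) / 2))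
    (hFth : Fth = min (n₁ * δt + α ^ (-j₁) / 2) (n₂ * δt + α ^ (-j₂) / 2) -
                    max (n₁ * δt - α ^ (-j₁) / 2) (n₂ * δt - α ^ (-j₂) / 2)) :
    -- the horizontal overlap is the positive multiple Ftw (independent of W₀, i, bX, m)
    -- of W₀/α^i
    (min (cellX α W₀ bX i m m₁ + cellW α W₀ i i₁ / 2)
          (cellX α W₀ bX i m m₂ + cellW α W₀ i i₂ / 2) -
        max (cellX α W₀ bX i m m₁ - cellW α W₀ i i₁ / 2)
          (cellX α W₀ bX i m m₂ - cellW α W₀ i i₂ / 2) = W₀ / α ^ i * Ftw) ∧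
      0 < Ftw ∧
      -- the vertical overlap is the analogous positive multiple Fth of H₀/α^j
      (min (cellX α H₀ bY j n n₁ + cellW α H₀ j j₁ / 2)
            (cellX α H₀ bY j n n₂ + cellW α H₀ j j₂ / 2) -
          max (cellX α H₀ bY j n n₁ - cellW α H₀ j j₁ / 2)
            (cellX α H₀ bY j n n₂ - cellW α H₀ j j₂ / 2) = H₀ / α ^ j * Fth) ∧
      0 < Fth ∧
      -- the intersection area factorizes as δ_i·F̃_w·δ_j·F̃_h·((1+α)/(1−α))²
      interArea (cellW α W₀ i i₁) (cellW α H₀ j j₁)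
          (cellX α W₀ bX i m m₁) (cellX α H₀ bY j n n₁)
          (cellW α W₀ i i₂) (cellW α H₀ j j₂)
          (cellX α W₀ bX i m m₂) (cellX α H₀ bY j n n₂) =
        cellDelta α W₀ i * Ftw * (cellDelta α H₀ j * Fth) * ((1 + α) / (1 - α)) ^ 2 := by
  obtain ⟨hα0, hα1⟩ := hα
  have hFtwpos : 0 < Ftw :=
    hFtw ▸ Ft_pos α δt m₁ m₂ i₁ i₂ ⟨hα0, hα1⟩ hδt hcond hm₁ hm₂ hi₁ hi₂
  have hFthpos : 0 < Fth :=
    hFth ▸ Ft_pos α δt n₁ n₂ j₁ j₂ ⟨hα0, hα1⟩ hδt hcond hn₁ hn₂ hj₁ hj₂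
  have hW : 0 < W₀ / α ^ i * Ftw := mul_pos (div_pos hW₀ (zpow_pos hα0 i)) hFtwpos
  have hH : 0 < H₀ / α ^ j * Fth := mul_pos (div_pos hH₀ (zpow_pos hα0 j)) hFthpos
  have h1 := overlap_eq α W₀ bX hα0 i m δt m₁ m₂ i₁ i₂ hδt hW₀.le
  have h2 := overlap_eq α H₀ bY hα0 j n δt n₁ n₂ j₁ j₂ hδt hH₀.le
  rw [← hFtw] at h1
  rw [← hFth] at h2
  refine ⟨h1, hFtwpos, h2, hFthpos, ?_⟩
  rw [interArea, h1, h2, max_eq_right hW.le, max_eq_right hH.le, cellDelta, cellDelta]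
  have h1α : (1:ℝ) - α ≠ 0 := by linarith
  have h2α : (1:ℝ) + α ≠ 0 := by linarith
  field_simp
end

section
/- (Lemma 1) Fix α ∈ (0, 1) with (1 − α)/(1 + α) < √α, cell parameterization data W₀, H₀ > 0, b_x, b_y ∈ ℝ, i, j, m, n ∈ ℤ, and fix the fractional offsets i₁, j₁, n₁, i₂, j₂, m₂, n₂ ∈ [−1/2, 1/2]. Then the function m₁ ↦ IoU(b₁, b₂) of the two parameterized boxes, defined on [−1/2, 1/2], attains its minimum at m₁ = −1/2 or m₁ = 1/2. -/
open Set

theorem QuasiconcaveOn.monotoneOn_comp {𝕜 E β γ : Type*} [Semiring 𝕜] [PartialOrder 𝕜]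
    [AddCommMonoid E] [SMul 𝕜 E] [LinearOrder β] [LinearOrder γ]
    {s : Set E} {t : Set β} {f : E → β} {g : β → γ}
    (hg : MonotoneOn g t) (hf : QuasiconcaveOn 𝕜 s f) (hst : MapsTo f s t) :
    QuasiconcaveOn 𝕜 s (g ∘ f) := by
  rw [quasiconcaveOn_iff_min_le] at hf ⊢
  refine ⟨hf.1, fun x hx y hy a b ha hb hab => ?_⟩
  have hmem := hf.1 hx hy ha hb hab
  have hmin := hf.2 hx hy ha hb hab
  rcases le_total (f x) (f y) with h | h
  · rw [min_eq_left h] at hmin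
    exact (min_le_left _ _).trans (hg (hst hx) (hst hmem) hmin)
  · rw [min_eq_right h] at hmin
    exact (min_le_right _ _).trans (hg (hst hy) (hst hmem) hmin)

theorem QuasiconcaveOn.exists_endpoint_le_Icc {β : Type*} [LinearOrder β] {f : ℝ → β} {a b : ℝ}
    (hf : QuasiconcaveOn ℝ (Icc a b) f) :
    ∃ e ∈ ({a, b} : Set ℝ), ∀ t ∈ Icc a b, f e ≤ f t := by
  have hle : ∀ t ∈ Icc a b, min (f a) (f b) ≤ f t := fun t ht => by
    have hab : a ≤ b := ht.1.trans ht.2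
    exact ((hf (min (f a) (f b))).segment_subset ⟨left_mem_Icc.2 hab, min_le_left _ _⟩
      ⟨right_mem_Icc.2 hab, min_le_right _ _⟩ (Icc_subset_segment ht)).2
  rcases le_total (f a) (f b) with h | h
  · exact ⟨a, Or.inl rfl, fun t ht => (min_eq_left h).symm.le.trans (hle t ht)⟩
  · exact ⟨b, Or.inr rfl, fun t ht => (min_eq_right h).symm.le.trans (hle t ht)⟩

theorem monotoneOn_div_sub_self (S : ℝ) : MonotoneOn (fun x => x / (S - x)) (Ico 0 S) := by
  intro x hx y hy hxy
  have hSx : 0 < S - x := sub_pos.2 hx.2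
  have hSy : 0 < S - y := sub_pos.2 hy.2
  rw [div_le_div_iff₀ hSx hSy]
  nlinarith [hx.1]

theorem QuasiconcaveOn.comp_affineMap {𝕜 E F β : Type*} [Ring 𝕜] [PartialOrder 𝕜]
    [AddCommGroup E] [Module 𝕜 E] [AddCommGroup F] [Module 𝕜 F] [LE β] {s : Set F} {f : F → β}
    (g : E →ᵃ[𝕜] F) (hf : QuasiconcaveOn 𝕜 s f) : QuasiconcaveOn 𝕜 (g ⁻¹' s) (f ∘ g) :=
  fun r => (hf r).affine_preimage g

theorem concaveOn_min_sub_max (a b c : ℝ) :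
    ConcaveOn ℝ univ fun x : ℝ => min (x + a) b - max (x - a) c :=
  (((concaveOn_id convex_univ).add_const a).inf (concaveOn_const b convex_univ)).sub
    (((convexOn_id convex_univ).add_const (-a)).sup (convexOn_const c convex_univ))

theorem max_zero_min_sub_max_le {a b x w : ℝ} (hw : 0 ≤ w) :
    max 0 (min a (x + w / 2) - max b (x - w / 2)) ≤ w :=
  max_le hw (by linarith [min_le_right a (x + w / 2), le_max_right b (x - w / 2)])

theorem interArea_nonneg (w₁ h₁ x₁ y₁ w₂ h₂ x₂ y₂ : ℝ) :
    0 ≤ interArea w₁ h₁ x₁ y₁ w₂ h₂ x₂ y₂ :=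
  mul_nonneg (le_max_left _ _) (le_max_left _ _)

theorem interArea_le_right (w₁ h₁ x₁ y₁ x₂ y₂ : ℝ) {w₂ h₂ : ℝ} (hw₂ : 0 ≤ w₂) (hh₂ : 0 ≤ h₂) :
    interArea w₁ h₁ x₁ y₁ w₂ h₂ x₂ y₂ ≤ w₂ * h₂ :=
  mul_le_mul (max_zero_min_sub_max_le hw₂) (max_zero_min_sub_max_le hh₂) (le_max_left _ _) hw₂

theorem quasiconcaveOn_interArea_left (w₁ h₁ y₁ w₂ h₂ x₂ y₂ : ℝ) :
    QuasiconcaveOn ℝ univ fun x₁ => interArea w₁ h₁ x₁ y₁ w₂ h₂ x₂ y₂ :=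
  (concaveOn_min_sub_max _ _ _).quasiconcaveOn.monotone_comp fun _ _ h =>
    mul_le_mul_of_nonneg_right (max_le_max le_rfl h) (le_max_left _ _)

theorem quasiconcaveOn_iou_left {w₁ h₁ w₂ h₂ : ℝ} (hw₁ : 0 < w₁) (hh₁ : 0 < h₁) (hw₂ : 0 ≤ w₂)
    (hh₂ : 0 ≤ h₂) (y₁ x₂ y₂ : ℝ) :
    QuasiconcaveOn ℝ univ fun x₁ => iou w₁ h₁ x₁ y₁ w₂ h₂ x₂ y₂ :=
  (quasiconcaveOn_interArea_left w₁ h₁ y₁ w₂ h₂ x₂ y₂).monotoneOn_comp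
    (monotoneOn_div_sub_self _) fun x₁ _ =>
      ⟨interArea_nonneg .., by
        linarith [interArea_le_right w₁ h₁ x₁ y₁ x₂ y₂ hw₂ hh₂, mul_pos hw₁ hh₁]⟩

theorem cellW_pos {α W₀ : ℝ} (hα : 0 < α) (hW₀ : 0 < W₀) (i : ℤ) (ik : ℝ) : 0 < cellW α W₀ i ik :=
  div_pos hW₀ (Real.rpow_pos_of_pos hα _)

theorem cellX_eq_lineMap (α W₀ bX : ℝ) (i m : ℤ) :
    cellX α W₀ bX i m = AffineMap.lineMap (cellX α W₀ bX i m 0) (cellX α W₀ bX i m 1) := by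
  ext t
  simp only [AffineMap.lineMap_apply_ring', cellX]
  ring

theorem stmt_12_general (α : ℝ) (hα : α ∈ Set.Ioo (0 : ℝ) 1)
    (W₀ H₀ bX bY : ℝ) (hW₀ : 0 < W₀) (hH₀ : 0 < H₀) (i j m n : ℤ)
    (i₁ j₁ n₁ i₂ j₂ m₂ n₂ : ℝ) :
    ∃ m₁ ∈ ({-(1:ℝ)/2, 1/2} : Set ℝ),
      ∀ t ∈ Set.Icc (-(1:ℝ)/2) (1/2),
        cellIoU α W₀ H₀ bX bY i j m n i₁ j₁ m₁ n₁ i₂ j₂ m₂ n₂ ≤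
          cellIoU α W₀ H₀ bX bY i j m n i₁ j₁ t n₁ i₂ j₂ m₂ n₂ := by
  refine QuasiconcaveOn.exists_endpoint_le_Icc ?_
  have h := (quasiconcaveOn_iou_left (cellW_pos hα.1 hW₀ i i₁) (cellW_pos hα.1 hH₀ j j₁)
    (cellW_pos hα.1 hW₀ i i₂).le (cellW_pos hα.1 hH₀ j j₂).le (cellX α H₀ bY j n n₁)
    (cellX α W₀ bX i m m₂) (cellX α H₀ bY j n n₂)).comp_affineMap
      (AffineMap.lineMap (cellX α W₀ bX i m 0) (cellX α W₀ bX i m 1))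
  rw [← cellX_eq_lineMap] at h
  exact Convex.quasiconcaveOn_restrict h (subset_univ _) (convex_Icc _ _)

theorem stmt_12 (α : ℝ) (hα : α ∈ Set.Ioo (0 : ℝ) 1)
    (hcond : (1 - α) / (1 + α) < Real.sqrt α)
    (W₀ H₀ bX bY : ℝ) (hW₀ : 0 < W₀) (hH₀ : 0 < H₀) (i j m n : ℤ)
    (i₁ j₁ n₁ i₂ j₂ m₂ n₂ : ℝ)
    (hi₁ : i₁ ∈ Set.Icc (-(1:ℝ)/2) (1/2)) (hj₁ : j₁ ∈ Set.Icc (-(1:ℝ)/2) (1/2))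
    (hn₁ : n₁ ∈ Set.Icc (-(1:ℝ)/2) (1/2))
    (hi₂ : i₂ ∈ Set.Icc (-(1:ℝ)/2) (1/2)) (hj₂ : j₂ ∈ Set.Icc (-(1:ℝ)/2) (1/2))
    (hm₂ : m₂ ∈ Set.Icc (-(1:ℝ)/2) (1/2)) (hn₂ : n₂ ∈ Set.Icc (-(1:ℝ)/2) (1/2)) :
    ∃ m₁ ∈ ({-(1:ℝ)/2, 1/2} : Set ℝ),
      ∀ t ∈ Set.Icc (-(1:ℝ)/2) (1/2),
        cellIoU α W₀ H₀ bX bY i j m n i₁ j₁ m₁ n₁ i₂ j₂ m₂ n₂ ≤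
          cellIoU α W₀ H₀ bX bY i j m n i₁ j₁ t n₁ i₂ j₂ m₂ n₂ :=
  stmt_12_general α hα W₀ H₀ bX bY hW₀ hH₀ i j m n i₁ j₁ n₁ i₂ j₂ m₂ n₂
end
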